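/- Let d ≥ 3 be an integer and set 2* = 2d/(d−2). Define W_0(x) = [d(d−2)]^{(d−2)/4} (1 + |x|²)^{−(d−2)/2}, W_1(x) = ((d−2)/2) W_0(x) + x · ∇W_0(x), and the quadratic form Q(g) = (1/2) ∫_{ℝ^d} |∇g|² dx − (1/2) ∫_{ℝ^d} W_0^{4/(d−2)} [((d+2)/(d−2)) (Re g)² + (Im g)²] dx. Then Q(iW_0) = 0, Q(W_1) = 0, and Q(W_0) = −(2/(d−2)) ∫_{ℝ^d} W_0^{2*} dx < 0. -/

import Mathlib

noncomputable section

open MeasureTheory Complex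

/-- Euclidean space `ℝ^d`. -/
abbrev Ed (d : ℕ) : Type := EuclideanSpace ℝ (Fin d)

/-- `i`-th component of the gradient of a complex-valued function. -/
def grad {d : ℕ} (f : Ed d → ℂ) (x : Ed d) (i : Fin d) : ℂ :=
  fderiv ℝ f x (EuclideanSpace.single i 1)

/-- `|∇f(x)|²` for complex-valued `f`. -/
def gradNormSq {d : ℕ} (f : Ed d → ℂ) (x : Ed d) : ℝ :=
  ∑ i, ‖grad f x i‖ ^ 2

/-- `i`-th component of the gradient of a real-valued function. -/
def gradR {d : ℕ} (f : Ed d → ℝ) (x : Ed d) (i : Fin d) : ℝ :=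
  fderiv ℝ f x (EuclideanSpace.single i 1)

/-- `|∇f(x)|²` for real-valued `f`. -/
def gradNormSqR {d : ℕ} (f : Ed d → ℝ) (x : Ed d) : ℝ :=
  ∑ i, gradR f x i ^ 2

/-- The Euclidean Laplacian (sum of second partial derivatives). -/
def lapR {d : ℕ} (f : Ed d → ℝ) (x : Ed d) : ℝ :=
  ∑ i, fderiv ℝ (fun y => fderiv ℝ f y (EuclideanSpace.single i 1)) x
    (EuclideanSpace.single i 1)

/-- A function on `ℝ^d` is radial if it depends only on `|x|`. -/
def IsRadial {d : ℕ} {α : Type*} (f : Ed d → α) : Prop :=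
  ∀ x y : Ed d, ‖x‖ = ‖y‖ → f x = f y

/-- `f` is admissible: `C¹` away from the origin, `|∇f| ∈ L²`, `f ∈ L^{2*}`,
and `∫ |x|⁻²|f|² < ∞`. -/
def Admissible {d : ℕ} (f : Ed d → ℂ) : Prop :=
  ContDiffOn ℝ 1 f {(0 : Ed d)}ᶜ ∧
  Integrable (fun x => gradNormSq f x) ∧
  Integrable (fun x => ‖f x‖ ^ ((2 * d : ℝ) / ((d : ℝ) - 2))) ∧
  Integrable (fun x => ‖f x‖ ^ 2 / ‖x‖ ^ 2)

/-- Squared modified Sobolev norm `‖f‖²_{Ḣ¹_γ}`. -/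
def H1gammaSq {d : ℕ} (γ : ℝ) (f : Ed d → ℂ) : ℝ :=
  ∫ x, (gradNormSq f x + γ / ‖x‖ ^ 2 * ‖f x‖ ^ 2)

/-- The energy `E_γ[f]`. -/
def energy {d : ℕ} (γ : ℝ) (f : Ed d → ℂ) : ℝ :=
  (1 / 2) * H1gammaSq γ f -
    (((d : ℝ) - 2) / (2 * (d : ℝ))) * ∫ x, ‖f x‖ ^ ((2 * d : ℝ) / ((d : ℝ) - 2))

/-- The real inner product of `Ḣ¹` viewed as a real Hilbert space. -/
def H1inner {d : ℕ} (f g : Ed d → ℂ) : ℝ :=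
  ∫ x, ∑ i, (grad f x i * (starRingEnd ℂ) (grad g x i)).re

/-- The Talenti function `W_0`. -/
def W0 (d : ℕ) (x : Ed d) : ℝ :=
  ((d : ℝ) * ((d : ℝ) - 2)) ^ (((d : ℝ) - 2) / 4) *
    (1 + ‖x‖ ^ 2) ^ (-(((d : ℝ) - 2) / 2))

/-- `W_1 = ((d-2)/2) W_0 + x · ∇W_0`. -/
def W1 (d : ℕ) (x : Ed d) : ℝ :=
  (((d : ℝ) - 2) / 2) * W0 d x + fderiv ℝ (W0 d) x x

/-- The sharp Sobolev constant `C_S(0)`. -/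
def CS0 (d : ℕ) : ℝ :=
  (∫ x, W0 d x ^ ((2 * d : ℝ) / ((d : ℝ) - 2))) ^ (((d : ℝ) - 2) / (2 * (d : ℝ))) /
    Real.sqrt (∫ x, gradNormSqR (W0 d) x)

/-- The quadratic form `Q` from the energy expansion around `W_0`. -/
def Qform (d : ℕ) (g : Ed d → ℂ) : ℝ :=
  (1 / 2) * (∫ x, gradNormSq g x) -
    (1 / 2) * ∫ x, W0 d x ^ ((4 : ℝ) / ((d : ℝ) - 2)) *
      ((((d : ℝ) + 2) / ((d : ℝ) - 2)) * (g x).re ^ 2 + (g x).im ^ 2)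

/-- The modulation `f_{[θ,μ]}(x) = e^{iθ} μ^{-(d-2)/2} f(x/μ)`. -/
def modScale {d : ℕ} (θ μ : ℝ) (f : Ed d → ℂ) (x : Ed d) : ℂ :=
  Complex.exp ((θ : ℂ) * Complex.I) *
    ((μ ^ (-(((d : ℝ) - 2) / 2)) : ℝ) : ℂ) * f (μ⁻¹ • x)

/-- Squared modified Sobolev norm for real-valued functions. -/
def H1gammaSqR {d : ℕ} (γ : ℝ) (f : Ed d → ℝ) : ℝ :=
  ∫ x, (gradNormSqR f x + γ / ‖x‖ ^ 2 * f x ^ 2)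

/-- Energy for real-valued functions. -/
def energyR {d : ℕ} (γ : ℝ) (f : Ed d → ℝ) : ℝ :=
  (1 / 2) * H1gammaSqR γ f -
    (((d : ℝ) - 2) / (2 * (d : ℝ))) * ∫ x, |f x| ^ ((2 * d : ℝ) / ((d : ℝ) - 2))

/-! All functions involved are radial, so in polar coordinates every integral becomes a
combination of the moments `M_m = ∫ ‖x‖ ^ m (1 + ‖x‖ ^ 2) ^ (-k)`. Integrating the derivative
of `r ^ (m + d) (1 + r ^ 2) ^ (1 - k)` over `(0, ∞)` gives the recurrence
`(2k - d - m - 2) M_{m+2} = (d + m) M_m`. For `k = d` one step of it is the identity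
`∫ |∇W₀|² = ∫ W₀^{2*}`, which gives `Q(iW₀) = 0` and the value of `Q(W₀)`; for `k = d + 2`
three steps give `∫ |∇W₁|² = (d+2)/(d-2) ∫ W₀^{4/(d-2)} W₁²`, i.e. `Q(W₁) = 0`. -/

open Real Set Filter Topology

lemma pow_le_one_add_sq_rpow {s : ℝ} (hs : 0 ≤ s) (j : ℕ) :
    s ^ j ≤ (1 + s ^ 2) ^ ((j : ℝ) / 2) := by
  have hsqrt : s ≤ √(1 + s ^ 2) := Real.le_sqrt_of_sq_le (by linarith)
  calc s ^ j ≤ √(1 + s ^ 2) ^ j := pow_le_pow_left₀ hs hsqrt j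
    _ = (1 + s ^ 2) ^ ((j : ℝ) / 2) := by
      rw [Real.sqrt_eq_rpow, ← rpow_mul_natCast (by positivity)]
      ring_nf

lemma pow_mul_one_add_sq_rpow_le {s : ℝ} (hs : 0 ≤ s) (j : ℕ) (k : ℝ) :
    s ^ j * (1 + s ^ 2) ^ (-k) ≤ (1 + s ^ 2) ^ (-(2 * k - j) / 2) := by
  have hpos : 0 < 1 + s ^ 2 := by positivity
  calc s ^ j * (1 + s ^ 2) ^ (-k) ≤ (1 + s ^ 2) ^ ((j : ℝ) / 2) * (1 + s ^ 2) ^ (-k) :=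
        mul_le_mul_of_nonneg_right (pow_le_one_add_sq_rpow hs j) (by positivity)
    _ = (1 + s ^ 2) ^ (-(2 * k - j) / 2) := by
      rw [← rpow_add hpos]; ring_nf

lemma integrableOn_pow_mul_one_add_sq_rpow {j : ℕ} {k : ℝ} (h : j + 1 < 2 * k) :
    IntegrableOn (fun r : ℝ => r ^ j * (1 + r ^ 2) ^ (-k)) (Ioi 0) := by
  have hdom : Integrable (fun r : ℝ => (1 + ‖r‖ ^ 2) ^ (-(2 * k - j) / 2)) :=
    integrable_rpow_neg_one_add_norm_sq (by simp; linarith)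
  refine hdom.integrableOn.mono' (by fun_prop) ?_
  filter_upwards [ae_restrict_mem measurableSet_Ioi] with r (hr : 0 < r)
  rw [Real.norm_of_nonneg (by positivity), Real.norm_eq_abs, abs_of_pos hr]
  exact pow_mul_one_add_sq_rpow_le hr.le j k

lemma integral_Ioi_pow_add_two_mul_one_add_sq_rpow {j : ℕ} {k : ℝ} (h : j + 3 < 2 * k) :
    (2 * k - j - 3) * ∫ r in Ioi (0 : ℝ), r ^ (j + 2) * (1 + r ^ 2) ^ (-k) =
      (j + 1) * ∫ r in Ioi (0 : ℝ), r ^ j * (1 + r ^ 2) ^ (-k) := by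
  have hint := integrableOn_pow_mul_one_add_sq_rpow (j := j) (k := k) (by linarith)
  have hint₂ := integrableOn_pow_mul_one_add_sq_rpow (j := j + 2) (k := k) (by push_cast; linarith)
  set F : ℝ → ℝ := fun r => r ^ (j + 1) * (1 + r ^ 2) ^ (1 - k)
  have hderiv : ∀ r ∈ Ici (0 : ℝ), HasDerivAt F
      ((j + 1) * (r ^ j * (1 + r ^ 2) ^ (-k)) -
        (2 * k - j - 3) * (r ^ (j + 2) * (1 + r ^ 2) ^ (-k))) r := by
    intro r _
    have hpos : 0 < 1 + r ^ 2 := by positivity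
    have hF : HasDerivAt F _ r := (hasDerivAt_pow (j + 1) r).mul
      (((hasDerivAt_pow 2 r).const_add 1).rpow_const (p := 1 - k) (Or.inl hpos.ne'))
    refine hF.congr_deriv ?_
    simp only [Nat.add_sub_cancel, Nat.cast_ofNat]
    rw [show (1 : ℝ) - k - 1 = -k by ring, show (1 : ℝ) - k = 1 + -k by ring,
      rpow_add hpos, rpow_one]
    push_cast
    ring
  have hlim : Tendsto F atTop (𝓝 0) := by
    have hdecay : Tendsto (fun r : ℝ => (1 + r ^ 2) ^ (-((2 * k - j - 3) / 2))) atTop (𝓝 0) :=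
      (tendsto_rpow_neg_atTop (by linarith)).comp
        (tendsto_atTop_add_const_left _ 1 (tendsto_pow_atTop two_ne_zero))
    refine squeeze_zero' ?_ ?_ hdecay
    · filter_upwards [eventually_ge_atTop 0] with r hr
      positivity
    · filter_upwards [eventually_ge_atTop 0] with r hr
      convert pow_mul_one_add_sq_rpow_le hr (j + 1) (k - 1) using 2 <;> push_cast <;> ring_nf
  have hIBP := integral_Ioi_of_hasDerivAt_of_tendsto' hderiv
    ((hint.const_mul _).sub (hint₂.const_mul _)) hlim
  rw [integral_sub (hint.const_mul _) (hint₂.const_mul _), integral_const_mul,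
    integral_const_mul] at hIBP
  have hF0 : F 0 = 0 := by simp [F]
  linarith

section NormMoment

open Module

variable {E : Type*} [NormedAddCommGroup E] [NormedSpace ℝ E] [FiniteDimensional ℝ E]
  [MeasurableSpace E] [BorelSpace E] (μ : Measure E) [μ.IsAddHaarMeasure]

def normMoment (m : ℕ) (k : ℝ) : ℝ := ∫ x, ‖x‖ ^ m * (1 + ‖x‖ ^ 2) ^ (-k) ∂μ

lemma integrable_pow_norm_mul_one_add_sq_rpow {m : ℕ} {k : ℝ}
    (h : finrank ℝ E + m < 2 * k) :
    Integrable (fun x => ‖x‖ ^ m * (1 + ‖x‖ ^ 2) ^ (-k)) μ := by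
  refine (integrable_rpow_neg_one_add_norm_sq (μ := μ) (r := 2 * k - m) (by linarith)).mono'
    (by fun_prop) (Eventually.of_forall fun x => ?_)
  rw [Real.norm_of_nonneg (by positivity)]
  exact pow_mul_one_add_sq_rpow_le (norm_nonneg x) m k

lemma normMoment_add_two [Nontrivial E] {m : ℕ} {k : ℝ}
    (h : finrank ℝ E + m + 2 < 2 * k) :
    (2 * k - finrank ℝ E - m - 2) * normMoment μ (m + 2) k =
      (finrank ℝ E + m) * normMoment μ m k := by
  have hdim : 1 ≤ finrank ℝ E := Module.finrank_pos
  have hpolar : ∀ n : ℕ, normMoment μ n k = finrank ℝ E * μ.real (Metric.ball 0 1) *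
      ∫ r in Ioi (0 : ℝ), r ^ (finrank ℝ E - 1 + n) * (1 + r ^ 2) ^ (-k) := by
    intro n
    simp only [normMoment, integral_fun_norm_addHaar μ (fun r => r ^ n * (1 + r ^ 2) ^ (-k)),
      nsmul_eq_mul, smul_eq_mul, pow_add, mul_assoc]
  have h1D := integral_Ioi_pow_add_two_mul_one_add_sq_rpow (j := finrank ℝ E - 1 + m)
    (k := k) (by push_cast [Nat.cast_sub hdim]; linarith)
  rw [hpolar, hpolar, ← add_assoc]
  push_cast [Nat.cast_sub hdim] at h1D ⊢
  linear_combination (finrank ℝ E * μ.real (Metric.ball 0 1)) * h1D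

lemma integral_trinomial_norm_mul_one_add_sq_rpow {m₁ m₂ m₃ : ℕ} {k : ℝ} (a b c : ℝ)
    (h₁ : finrank ℝ E + m₁ < 2 * k) (h₂ : finrank ℝ E + m₂ < 2 * k)
    (h₃ : finrank ℝ E + m₃ < 2 * k) :
    ∫ x, (a * ‖x‖ ^ m₁ + b * ‖x‖ ^ m₂ + c * ‖x‖ ^ m₃) * (1 + ‖x‖ ^ 2) ^ (-k) ∂μ =
      a * normMoment μ m₁ k + b * normMoment μ m₂ k + c * normMoment μ m₃ k := by
  have i₁ := (integrable_pow_norm_mul_one_add_sq_rpow μ h₁).const_mul a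
  have i₂ := (integrable_pow_norm_mul_one_add_sq_rpow μ h₂).const_mul b
  have i₃ := (integrable_pow_norm_mul_one_add_sq_rpow μ h₃).const_mul c
  simp only [add_mul, mul_assoc]
  rw [integral_add ?_ i₃, integral_add i₁ i₂, integral_const_mul, integral_const_mul,
    integral_const_mul, normMoment, normMoment, normMoment]
  exact i₁.add i₂

end NormMoment

lemma hasFDerivAt_comp_norm_sq {E : Type*} [NormedAddCommGroup E] [InnerProductSpace ℝ E]
    {φ : ℝ → ℝ} {φ' : ℝ} (x : E) (hφ : HasDerivAt φ φ' (‖x‖ ^ 2)) :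
    HasFDerivAt (fun y => φ (‖y‖ ^ 2)) ((2 * φ') • innerSL ℝ x) x := by
  refine (hφ.comp_hasFDerivAt x (hasStrictFDerivAt_norm_sq x).hasFDerivAt).congr_fderiv ?_
  ext v
  simp only [smul_apply, coe_innerSL_apply, nsmul_eq_mul, Nat.cast_ofNat, smul_eq_mul]
  ring

section Euclidean

variable {d : ℕ}

lemma gradNormSqR_comp_norm_sq {φ : ℝ → ℝ} {φ' : ℝ} {x : Ed d}
    (hφ : HasDerivAt φ φ' (‖x‖ ^ 2)) :
    gradNormSqR (fun y => φ (‖y‖ ^ 2)) x = (2 * φ') ^ 2 * ‖x‖ ^ 2 := by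
  simp only [gradNormSqR, gradR, (hasFDerivAt_comp_norm_sq x hφ).fderiv]
  simp [EuclideanSpace.inner_single_right, EuclideanSpace.real_norm_sq_eq, mul_pow, Finset.mul_sum]

lemma gradNormSq_const_mul_ofReal (c : ℂ) {f : Ed d → ℝ} {x : Ed d}
    (hf : DifferentiableAt ℝ f x) :
    gradNormSq (fun y => c * (f y : ℂ)) x = ‖c‖ ^ 2 * gradNormSqR f x := by
  have h : HasFDerivAt (fun y => c * (f y : ℂ)) (c • (ofRealCLM.comp (fderiv ℝ f x))) x :=
    (ofRealCLM.hasFDerivAt.comp x hf.hasFDerivAt).const_mul c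
  simp [gradNormSq, gradNormSqR, grad, gradR, h.fderiv, mul_pow, Finset.mul_sum, sq_abs]

lemma normMoment_euclideanSpace_add_two (hd : 0 < d) {m : ℕ} {k : ℝ} (h : d + m + 2 < 2 * k) :
    (2 * k - d - m - 2) * normMoment (volume : Measure (Ed d)) (m + 2) k =
      (d + m) * normMoment (volume : Measure (Ed d)) m k := by
  have : Nontrivial (Ed d) := Module.nontrivial_of_finrank_pos (R := ℝ) (by simpa using hd)
  simpa using normMoment_add_two (volume : Measure (Ed d)) (m := m) (k := k) (by simpa using h)

lemma cast_mul_cast_sub_two_pos (hd : 2 < d) : 0 < (d : ℝ) * ((d : ℝ) - 2) := by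
  have : (2 : ℝ) < d := by exact_mod_cast hd
  nlinarith

lemma cast_sub_two_ne_zero (hd : 2 < d) : (d : ℝ) - 2 ≠ 0 :=
  (sub_pos.2 (by exact_mod_cast hd : (2 : ℝ) < d)).ne'

def talentiConst (d : ℕ) : ℝ := ((d : ℝ) * ((d : ℝ) - 2)) ^ (((d : ℝ) - 2) / 4)

lemma talentiConst_sq_mul (hd : 2 < d) :
    talentiConst d ^ 2 * ((d : ℝ) * ((d : ℝ) - 2)) =
      ((d : ℝ) * ((d : ℝ) - 2)) ^ ((d : ℝ) / 2) := by
  have hB := cast_mul_cast_sub_two_pos hd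
  rw [talentiConst, ← rpow_mul_natCast hB.le, ← rpow_add_one hB.ne']
  norm_num
  ring_nf

lemma hasDerivAt_W0_profile {t : ℝ} (ht : 0 ≤ t) :
    HasDerivAt (fun s => talentiConst d * (1 + s) ^ (-(((d : ℝ) - 2) / 2)))
      (-(talentiConst d * ((d : ℝ) - 2) / 2) * (1 + t) ^ (-((d : ℝ) / 2))) t := by
  refine (((hasDerivAt_id t).const_add 1).rpow_const (Or.inl (by positivity))).const_mul _
    |>.congr_deriv ?_
  rw [show -(((d : ℝ) - 2) / 2) - 1 = -((d : ℝ) / 2) by ring]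
  simp only [id]
  ring

lemma differentiable_W0 : Differentiable ℝ (W0 d) := fun x =>
  (hasFDerivAt_comp_norm_sq x (hasDerivAt_W0_profile (sq_nonneg ‖x‖))).differentiableAt

lemma gradNormSqR_W0 (x : Ed d) :
    gradNormSqR (W0 d) x =
      (talentiConst d * ((d : ℝ) - 2)) ^ 2 * (‖x‖ ^ 2 * (1 + ‖x‖ ^ 2) ^ (-(d : ℝ))) := by
  refine (gradNormSqR_comp_norm_sq (hasDerivAt_W0_profile (sq_nonneg ‖x‖))).trans ?_
  rw [mul_pow, mul_pow, ← rpow_mul_natCast (by positivity)]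
  push_cast
  ring_nf

lemma W1_eq (x : Ed d) :
    W1 d x = talentiConst d * ((d : ℝ) - 2) / 2 *
      ((1 - ‖x‖ ^ 2) * (1 + ‖x‖ ^ 2) ^ (-((d : ℝ) / 2))) := by
  have hpos : 0 < 1 + ‖x‖ ^ 2 := by positivity
  have hW0 : W0 d x = talentiConst d * ((1 + ‖x‖ ^ 2) * (1 + ‖x‖ ^ 2) ^ (-((d : ℝ) / 2))) := by
    rw [W0, ← talentiConst, show -(((d : ℝ) - 2) / 2) = 1 + -((d : ℝ) / 2) by ring,
      rpow_add hpos, rpow_one]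
  have hderiv : HasFDerivAt (W0 d) _ x :=
    hasFDerivAt_comp_norm_sq x (hasDerivAt_W0_profile (sq_nonneg ‖x‖))
  rw [W1, hderiv.fderiv, hW0]
  simp only [smul_apply, innerSL_apply_apply, real_inner_self_eq_norm_sq, smul_eq_mul]
  ring

lemma hasDerivAt_W1_profile {t : ℝ} (ht : 0 ≤ t) :
    HasDerivAt (fun s => talentiConst d * ((d : ℝ) - 2) / 2 *
      ((1 - s) * (1 + s) ^ (-((d : ℝ) / 2))))
      (-(talentiConst d * ((d : ℝ) - 2) / 4) * (((d : ℝ) + 2) - ((d : ℝ) - 2) * t) *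
        (1 + t) ^ (-((d : ℝ) / 2) - 1)) t := by
  have hpos : 0 < 1 + t := by positivity
  refine ((((hasDerivAt_id t).const_sub 1).mul (((hasDerivAt_id t).const_add 1).rpow_const
    (p := -((d : ℝ) / 2)) (Or.inl hpos.ne'))).const_mul _).congr_deriv ?_
  simp only [id, rpow_sub_one hpos.ne']
  field_simp
  ring

lemma differentiable_W1 : Differentiable ℝ (W1 d) := by
  rw [show W1 d = _ from funext W1_eq]
  exact fun x =>
    (hasFDerivAt_comp_norm_sq x (hasDerivAt_W1_profile (sq_nonneg ‖x‖))).differentiableAt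

lemma gradNormSqR_W1 (x : Ed d) :
    gradNormSqR (W1 d) x = (talentiConst d * ((d : ℝ) - 2) / 2) ^ 2 *
      ((((d : ℝ) + 2) - ((d : ℝ) - 2) * ‖x‖ ^ 2) ^ 2 * ‖x‖ ^ 2 *
        (1 + ‖x‖ ^ 2) ^ (-((d : ℝ) + 2))) := by
  rw [show W1 d = _ from funext W1_eq,
    gradNormSqR_comp_norm_sq (hasDerivAt_W1_profile (sq_nonneg ‖x‖)), mul_pow, mul_pow, mul_pow,
    ← rpow_mul_natCast (by positivity)]
  push_cast
  ring_nf

lemma W0_pos (hd : 2 < d) (x : Ed d) : 0 < W0 d x :=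
  mul_pos (rpow_pos_of_pos (cast_mul_cast_sub_two_pos hd) _) (rpow_pos_of_pos (by positivity) _)

lemma W0_rpow (hd : 2 < d) (x : Ed d) (q : ℝ) :
    W0 d x ^ q = ((d : ℝ) * ((d : ℝ) - 2)) ^ (((d : ℝ) - 2) / 4 * q) *
      (1 + ‖x‖ ^ 2) ^ (-(((d : ℝ) - 2) / 2) * q) := by
  have hB := cast_mul_cast_sub_two_pos hd
  rw [W0, mul_rpow (rpow_pos_of_pos hB _).le (by positivity), ← rpow_mul hB.le,
    ← rpow_mul (by positivity)]

lemma W0_rpow_four_div (hd : 2 < d) (x : Ed d) :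
    W0 d x ^ (4 / ((d : ℝ) - 2)) = (d : ℝ) * ((d : ℝ) - 2) * (1 + ‖x‖ ^ 2) ^ (-2 : ℝ) := by
  have := cast_sub_two_ne_zero hd
  rw [W0_rpow hd, show ((d : ℝ) - 2) / 4 * (4 / ((d : ℝ) - 2)) = 1 by field_simp, rpow_one,
    show -(((d : ℝ) - 2) / 2) * (4 / ((d : ℝ) - 2)) = -2 by field_simp; norm_num]

lemma W0_rpow_two_mul_div (hd : 2 < d) (x : Ed d) :
    W0 d x ^ (2 * (d : ℝ) / ((d : ℝ) - 2)) =
      ((d : ℝ) * ((d : ℝ) - 2)) ^ ((d : ℝ) / 2) * (1 + ‖x‖ ^ 2) ^ (-(d : ℝ)) := by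
  have := cast_sub_two_ne_zero hd
  rw [W0_rpow hd]
  congr 2
  · field_simp
    ring
  · field_simp

lemma W0_rpow_four_div_mul_sq (hd : 2 < d) (x : Ed d) :
    W0 d x ^ (4 / ((d : ℝ) - 2)) * W0 d x ^ 2 = W0 d x ^ (2 * (d : ℝ) / ((d : ℝ) - 2)) := by
  have := cast_sub_two_ne_zero hd
  rw [← rpow_natCast, ← rpow_add (W0_pos hd x)]
  congr 1
  field_simp
  ring

lemma W0_rpow_four_div_mul_W1_sq (hd : 2 < d) (x : Ed d) :
    W0 d x ^ (4 / ((d : ℝ) - 2)) * W1 d x ^ 2 =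
      (talentiConst d * ((d : ℝ) - 2) / 2) ^ 2 * ((d : ℝ) * ((d : ℝ) - 2)) *
        ((1 - ‖x‖ ^ 2) ^ 2 * (1 + ‖x‖ ^ 2) ^ (-((d : ℝ) + 2))) := by
  have hpos : 0 < 1 + ‖x‖ ^ 2 := by positivity
  rw [W0_rpow_four_div hd, W1_eq, mul_pow, mul_pow, ← rpow_mul_natCast hpos.le,
    show -((d : ℝ) + 2) = -2 + -((d : ℝ) / 2) * ((2 : ℕ) : ℝ) by push_cast; ring, rpow_add hpos]
  ring

lemma integral_gradNormSqR_W0 (hd : 2 < d) :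
    ∫ x, gradNormSqR (W0 d) x = ∫ x, W0 d x ^ (2 * (d : ℝ) / ((d : ℝ) - 2)) := by
  have hd' : (2 : ℝ) < d := by exact_mod_cast hd
  have hrec := normMoment_euclideanSpace_add_two (by omega : 0 < d) (m := 0) (k := d)
    (by push_cast; linarith)
  calc ∫ x, gradNormSqR (W0 d) x
      = (talentiConst d * ((d : ℝ) - 2)) ^ 2 * normMoment (volume : Measure (Ed d)) 2 d := by
        simp_rw [gradNormSqR_W0]
        rw [integral_const_mul, normMoment]
    _ = ((d : ℝ) * ((d : ℝ) - 2)) ^ ((d : ℝ) / 2) * normMoment (volume : Measure (Ed d)) 0 d := by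
        rw [← talentiConst_sq_mul hd]
        push_cast at hrec
        linear_combination (talentiConst d ^ 2 * ((d : ℝ) - 2)) * hrec
    _ = ∫ x, W0 d x ^ (2 * (d : ℝ) / ((d : ℝ) - 2)) := by
        simp_rw [W0_rpow_two_mul_div hd]
        rw [integral_const_mul, normMoment]
        simp only [pow_zero, one_mul]

lemma integral_gradNormSqR_W1 (hd : 2 < d) :
    ∫ x, gradNormSqR (W1 d) x =
      ((d : ℝ) + 2) / ((d : ℝ) - 2) * ∫ x, W0 d x ^ (4 / ((d : ℝ) - 2)) * W1 d x ^ 2 := by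
  have hd' : (2 : ℝ) < d := by exact_mod_cast hd
  set M : ℕ → ℝ := fun m => normMoment (volume : Measure (Ed d)) m ((d : ℝ) + 2)
  have hrec : ∀ m : ℕ, m < d + 2 → ((d : ℝ) + 2 - m) * M (m + 2) = (d + m) * M m := by
    intro m hm
    have hm' : (m : ℝ) < d + 2 := by exact_mod_cast hm
    have := normMoment_euclideanSpace_add_two (by omega : 0 < d) (m := m) (k := (d : ℝ) + 2)
      (by linarith)
    linear_combination this
  have hgrad : ∫ x, gradNormSqR (W1 d) x = (talentiConst d * ((d : ℝ) - 2) / 2) ^ 2 *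
      (((d : ℝ) + 2) ^ 2 * M 2 + (-(2 * ((d : ℝ) + 2) * ((d : ℝ) - 2))) * M 4 +
        ((d : ℝ) - 2) ^ 2 * M 6) := by
    rw [← integral_trinomial_norm_mul_one_add_sq_rpow _ _ _ _ (by simp; linarith)
      (by simp; linarith) (by simp; linarith), ← integral_const_mul]
    congr 1 with x
    rw [gradNormSqR_W1]
    ring
  have hpot : ∫ x, W0 d x ^ (4 / ((d : ℝ) - 2)) * W1 d x ^ 2 =
      (talentiConst d * ((d : ℝ) - 2) / 2) ^ 2 * ((d : ℝ) * ((d : ℝ) - 2)) *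
        (1 * M 0 + (-2) * M 2 + 1 * M 4) := by
    rw [← integral_trinomial_norm_mul_one_add_sq_rpow _ _ _ _ (by simp; linarith)
      (by simp; linarith) (by simp; linarith), ← integral_const_mul]
    congr 1 with x
    rw [W0_rpow_four_div_mul_W1_sq hd]
    ring
  have hmoments : ((d : ℝ) + 2) ^ 2 * M 2 + (-(2 * ((d : ℝ) + 2) * ((d : ℝ) - 2))) * M 4 +
      ((d : ℝ) - 2) ^ 2 * M 6 = d * ((d : ℝ) + 2) * (1 * M 0 + (-2) * M 2 + 1 * M 4) := by
    have h0 := hrec 0 (by omega)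
    have h2 := hrec 2 (by omega)
    have h4 := hrec 4 (by omega)
    push_cast at h0 h2 h4
    linear_combination ((d : ℝ) + 2) * h0 - 2 * (d : ℝ) * h2 + ((d : ℝ) - 2) * h4
  rw [hgrad, hpot, hmoments]
  field_simp [cast_sub_two_ne_zero hd]

lemma integral_W0_rpow_two_mul_div_pos (hd : 2 < d) :
    0 < ∫ x, W0 d x ^ (2 * (d : ℝ) / ((d : ℝ) - 2)) := by
  have hd' : (2 : ℝ) < d := by exact_mod_cast hd
  have hpos : ∀ x, 0 < W0 d x ^ (2 * (d : ℝ) / ((d : ℝ) - 2)) :=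
    fun x => rpow_pos_of_pos (W0_pos hd x) _
  have hint : Integrable (fun x : Ed d => W0 d x ^ (2 * (d : ℝ) / ((d : ℝ) - 2))) := by
    simp_rw [W0_rpow_two_mul_div hd]
    simpa using (integrable_pow_norm_mul_one_add_sq_rpow (volume : Measure (Ed d)) (m := 0)
      (k := d) (by simp; linarith)).const_mul (((d : ℝ) * ((d : ℝ) - 2)) ^ ((d : ℝ) / 2))
  rw [integral_pos_iff_support_of_nonneg (fun x => (hpos x).le) hint,
    Function.support_eq_univ fun x => (hpos x).ne']
  exact Measure.measure_univ_pos.2 (NeZero.ne _)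

lemma Qform_ofReal {f : Ed d → ℝ} (hf : Differentiable ℝ f) :
    Qform d (fun y => (f y : ℂ)) = 1 / 2 * (∫ x, gradNormSqR f x) -
      1 / 2 * (((d : ℝ) + 2) / ((d : ℝ) - 2) * ∫ x, W0 d x ^ (4 / ((d : ℝ) - 2)) * f x ^ 2) := by
  have hgrad : ∀ x, gradNormSq (fun y => (f y : ℂ)) x = gradNormSqR f x := fun x => by
    simpa using gradNormSq_const_mul_ofReal 1 (hf x)
  simp only [Qform, hgrad, ofReal_re, ofReal_im]
  congr 2
  rw [← integral_const_mul]
  congr 1 with x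
  ring

lemma Qform_I_mul_ofReal {f : Ed d → ℝ} (hf : Differentiable ℝ f) :
    Qform d (fun y => Complex.I * (f y : ℂ)) = 1 / 2 * (∫ x, gradNormSqR f x) -
      1 / 2 * ∫ x, W0 d x ^ (4 / ((d : ℝ) - 2)) * f x ^ 2 := by
  have hgrad : ∀ x, gradNormSq (fun y => Complex.I * (f y : ℂ)) x = gradNormSqR f x := fun x => by
    simpa using gradNormSq_const_mul_ofReal Complex.I (hf x)
  simp only [Qform, hgrad, mul_re, mul_im, I_re, I_im, ofReal_re, ofReal_im]
  congr 3 with x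
  ring

end Euclidean

/-- values of the quadratic form `Q` on `iW_0`, `W_1` and `W_0`. -/
theorem statement13 (d : ℕ) (hd : 3 ≤ d) :
    Qform d (fun y : Ed d => Complex.I * (W0 d y : ℂ)) = 0 ∧
    Qform d (fun y : Ed d => (W1 d y : ℂ)) = 0 ∧
    Qform d (fun y : Ed d => (W0 d y : ℂ)) =
      -(2 / ((d : ℝ) - 2)) * ∫ x, W0 d x ^ ((2 * d : ℝ) / ((d : ℝ) - 2)) ∧
    Qform d (fun y : Ed d => (W0 d y : ℂ)) < 0 := by
  have hd₂ : 2 < d := hd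
  have hQ₀ : Qform d (fun y : Ed d => (W0 d y : ℂ)) =
      -(2 / ((d : ℝ) - 2)) * ∫ x, W0 d x ^ ((2 * d : ℝ) / ((d : ℝ) - 2)) := by
    rw [Qform_ofReal differentiable_W0, integral_gradNormSqR_W0 hd₂]
    simp_rw [W0_rpow_four_div_mul_sq hd₂]
    field_simp [cast_sub_two_ne_zero hd₂]
    ring
  refine ⟨?_, ?_, hQ₀, ?_⟩
  · rw [Qform_I_mul_ofReal differentiable_W0, integral_gradNormSqR_W0 hd₂]
    simp_rw [W0_rpow_four_div_mul_sq hd₂]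
    ring
  · rw [Qform_ofReal differentiable_W1, integral_gradNormSqR_W1 hd₂]
    ring
  · rw [hQ₀]
    have : (0 : ℝ) < (d : ℝ) - 2 := sub_pos.2 (by exact_mod_cast hd₂)
    exact mul_neg_of_neg_of_pos (by simpa using this) (integral_W0_rpow_two_mul_div_pos hd₂)
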